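/- Let a be a positive integer, b an integer coprime to a, b' an integer with b·b' ≡ 1 (mod a), and γ, δ integers. Then ∑_{r=1}^{a} ( {(γ − r·b)/a} + {(δ − r·b)/a} − {(γ + r·b)/a} − {(δ + r·b)/a} ) · ((r/a)) = −2·s(b, a; γ/a, 0) − 2·s(b, a; δ/a, 0) − ((b'·γ/a)) − ((b'·δ/a)). -/

import Mathlib

open scoped BigOperators

/-- The sawtooth function `((x))`: `x - ⌊x⌋ - 1/2` if `x` is not an integer, `0` otherwise. -/
noncomputable def sawtooth (x : ℝ) : ℝ :=
  if Int.fract x = 0 then 0 else Int.fract x - 1/2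

/-- The Dedekind–Rademacher sum `s(b, a; x, y)`. -/
noncomputable def drSum (b : ℤ) (a : ℕ) (x y : ℝ) : ℝ :=
  ∑ j ∈ Finset.range a, sawtooth (x + b * ((j : ℝ) + y) / a) * sawtooth (((j : ℝ) + y) / a)

/-!
Write `{x} = ((x)) + 1/2 - [x ∈ ℤ]/2`. The reflection `r ↦ a - r` negates `((r/a))` and, modulo
integers, exchanges `(c - r b)/a` with `(c + r b)/a`; so for `c = γ, δ` the sum over `1 ≤ r ≤ a`
becomes `-2 ∑_{r < a} {(c + r b)/a} ((r/a))`. Substituting the formula for `{·}`, the sawtooth part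
is `s(b, a; c/a, 0)`, `∑_{r < a} ((r/a))` vanishes by the same reflection, and the correction term
only sees the unique `r < a` with `a ∣ c + r b`, i.e. `r ≡ -b' c (mod a)`, giving `((-b' c / a))/2`.
-/

open Finset

lemma sawtooth_congr {x y : ℝ} (h : Int.fract x = Int.fract y) : sawtooth x = sawtooth y := by
  rw [sawtooth, sawtooth, h]

lemma sawtooth_intCast (n : ℤ) : sawtooth n = 0 := by
  simp [sawtooth]

lemma sawtooth_zero : sawtooth 0 = 0 := by
  exact_mod_cast sawtooth_intCast 0

lemma sawtooth_natCast_div_self (a : ℕ) : sawtooth ((a : ℝ) / a) = 0 := by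
  rcases eq_or_ne a 0 with rfl | ha
  · simp [sawtooth]
  · rw [div_self (by exact_mod_cast ha)]
    exact_mod_cast sawtooth_intCast 1

lemma sawtooth_neg (x : ℝ) : sawtooth (-x) = -sawtooth x := by
  unfold sawtooth
  by_cases h : Int.fract x = 0
  · simp [h]
  · rw [if_neg (mt Int.fract_neg_eq_zero.mp h), if_neg h, Int.fract_neg h]
    ring

lemma sawtooth_one_sub (x : ℝ) : sawtooth (1 - x) = -sawtooth x := by
  rw [sub_eq_neg_add, ← sawtooth_neg]
  exact_mod_cast sawtooth_congr (Int.fract_add_intCast (-x) 1)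

lemma fract_eq_sawtooth_add (x : ℝ) :
    Int.fract x = sawtooth x + 1 / 2 - if Int.fract x = 0 then 1 / 2 else 0 := by
  unfold sawtooth
  split_ifs with h <;> simp [h]

lemma fract_intCast_div_eq_zero_iff {m : ℤ} {a : ℕ} (ha : a ≠ 0) :
    Int.fract ((m : ℝ) / a) = 0 ↔ (a : ℤ) ∣ m := by
  rw [Int.fract_div_intCast_eq_div_intCast_mod, div_eq_zero_iff]
  simp only [Int.cast_eq_zero, Nat.cast_eq_zero, ha, or_false]
  exact Int.dvd_iff_emod_eq_zero.symm

lemma sawtooth_intCast_div_eq_of_modEq {m n : ℤ} {a : ℕ} (h : m ≡ n [ZMOD a]) :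
    sawtooth ((m : ℝ) / a) = sawtooth ((n : ℝ) / a) := by
  apply sawtooth_congr
  rw [Int.fract_div_intCast_eq_div_intCast_mod, Int.fract_div_intCast_eq_div_intCast_mod, h]

section Reindex

variable {M : Type*} [AddCommMonoid M]

lemma sum_Icc_one_eq_sum_range {f : ℕ → M} {a : ℕ} (h : f a = f 0) :
    ∑ r ∈ Icc 1 a, f r = ∑ r ∈ range a, f r := by
  rw [← Ico_add_one_right_eq_Icc, sum_Ico_eq_sum_range, add_tsub_cancel_right]
  cases a with
  | zero => simp
  | succ n => rw [sum_range_succ, sum_range_succ', add_comm 1 n, h]; simp only [add_comm 1]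

lemma sum_Icc_one_eq_sum_range_sub (f : ℕ → M) (a : ℕ) :
    ∑ r ∈ Icc 1 a, f r = ∑ r ∈ range a, f (a - r) := by
  rw [← Ico_add_one_right_eq_Icc, range_eq_Ico, sum_Ico_reflect f 0 (Nat.le_succ a)]
  simp

end Reindex

lemma sum_range_sawtooth_div_eq_zero (a : ℕ) : ∑ r ∈ range a, sawtooth ((r : ℝ) / a) = 0 := by
  have hendpoints : sawtooth ((a : ℝ) / a) = sawtooth (((0 : ℕ) : ℝ) / a) := by
    rw [sawtooth_natCast_div_self, Nat.cast_zero, zero_div, sawtooth_zero]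
  have hreflect : ∑ r ∈ range a, sawtooth ((r : ℝ) / a)
      = -∑ r ∈ range a, sawtooth ((r : ℝ) / a) :=
    calc ∑ r ∈ range a, sawtooth ((r : ℝ) / a)
        = ∑ r ∈ Icc 1 a, sawtooth ((r : ℝ) / a) := (sum_Icc_one_eq_sum_range hendpoints).symm
      _ = ∑ r ∈ range a, sawtooth (((a - r : ℕ) : ℝ) / a) := sum_Icc_one_eq_sum_range_sub _ a
      _ = -∑ r ∈ range a, sawtooth ((r : ℝ) / a) := by
          rw [← sum_neg_distrib]
          refine sum_congr rfl fun r hr => ?_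
          have hr : r < a := mem_range.mp hr
          have ha : (a : ℝ) ≠ 0 := by exact_mod_cast (Nat.zero_le r).trans_lt hr |>.ne'
          rw [Nat.cast_sub hr.le, sub_div, div_self ha, sawtooth_one_sub]
  linarith

lemma dvd_add_mul_iff_modEq {a b b' c r : ℤ} (hbb' : b * b' ≡ 1 [ZMOD a]) :
    a ∣ c + r * b ↔ -(b' * c) ≡ r [ZMOD a] := by
  have hunit : a ∣ 1 - b * b' := hbb'.dvd
  rw [Int.modEq_iff_dvd]
  constructor
  · intro h
    have hid : r - -(b' * c) = b' * (c + r * b) + r * (1 - b * b') := by ring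
    exact hid ▸ dvd_add (h.mul_left b') (hunit.mul_left r)
  · intro h
    have hid : c + r * b = b * (r - -(b' * c)) + c * (1 - b * b') := by ring
    exact hid ▸ dvd_add (h.mul_left b) (hunit.mul_left c)

lemma sum_range_ite_dvd_sawtooth (a : ℕ) {b b' : ℤ} (c : ℤ) (hbb' : b * b' ≡ 1 [ZMOD a]) :
    ∑ r ∈ range a, (if (a : ℤ) ∣ c + r * b then sawtooth ((r : ℝ) / a) else 0)
      = -sawtooth ((b' : ℝ) * c / a) := by
  rcases Nat.eq_zero_or_pos a with rfl | ha
  · simp [sawtooth_zero]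
  set m := (-(b' * c)) % (a : ℤ) with hm
  have hm_nonneg : 0 ≤ m := Int.emod_nonneg _ (by omega)
  have hm_lt : m < a := Int.emod_lt_of_pos _ (by omega)
  have hcond : ∀ r ∈ range a, (a : ℤ) ∣ c + r * b ↔ m.toNat = r := by
    intro r hr
    rw [dvd_add_mul_iff_modEq hbb', Int.ModEq, ← hm,
      Int.emod_eq_of_lt (a := (r : ℤ)) (by omega) (by simpa using hr)]
    omega
  rw [sum_congr rfl fun r hr => if_congr (hcond r hr) rfl rfl,
    sum_ite_eq _ _ _, if_pos (mem_range.mpr (by omega))]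
  calc sawtooth ((m.toNat : ℝ) / a)
      = sawtooth (((-(b' * c) : ℤ) : ℝ) / a) := by
        rw [← Int.cast_natCast, Int.toNat_of_nonneg hm_nonneg]
        exact sawtooth_intCast_div_eq_of_modEq (Int.mod_modEq _ _)
    _ = -sawtooth ((b' : ℝ) * c / a) := by
        push_cast
        rw [neg_div, sawtooth_neg]

lemma sum_range_fract_mul_sawtooth_eq_drSum (a : ℕ) {b b' : ℤ} (c : ℤ)
    (hbb' : b * b' ≡ 1 [ZMOD a]) :
    ∑ r ∈ range a, Int.fract (((c : ℝ) + r * b) / a) * sawtooth ((r : ℝ) / a)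
      = drSum b a ((c : ℝ) / a) 0 + 1 / 2 * sawtooth ((b' : ℝ) * c / a) := by
  have hterm : ∀ r ∈ range a, Int.fract (((c : ℝ) + r * b) / a) * sawtooth ((r : ℝ) / a)
      = sawtooth ((c : ℝ) / a + b * ((r : ℝ) + 0) / a) * sawtooth (((r : ℝ) + 0) / a)
        + 1 / 2 * sawtooth ((r : ℝ) / a)
        - 1 / 2 * (if (a : ℤ) ∣ c + r * b then sawtooth ((r : ℝ) / a) else 0) := by
    intro r hr
    have ha : a ≠ 0 := (Nat.zero_le r).trans_lt (mem_range.mp hr) |>.ne'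
    have hnum : ((c : ℝ) + r * b) = ((c + r * b : ℤ) : ℝ) := by push_cast; rfl
    have harg : (c : ℝ) / a + b * ((r : ℝ) + 0) / a = ((c : ℝ) + r * b) / a := by ring
    rw [harg, add_zero, fract_eq_sawtooth_add, hnum]
    simp only [fract_intCast_div_eq_zero_iff ha]
    split_ifs <;> ring
  rw [sum_congr rfl hterm, sum_sub_distrib, sum_add_distrib, ← mul_sum, ← mul_sum,
    sum_range_sawtooth_div_eq_zero, sum_range_ite_dvd_sawtooth a c hbb', drSum]
  ring

lemma sum_Icc_fract_sub_mul_sawtooth (a : ℕ) (b c : ℤ) :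
    ∑ r ∈ Icc 1 a, Int.fract (((c : ℝ) - r * b) / a) * sawtooth ((r : ℝ) / a)
      = -∑ r ∈ range a, Int.fract (((c : ℝ) + r * b) / a) * sawtooth ((r : ℝ) / a) := by
  rw [sum_Icc_one_eq_sum_range_sub, ← sum_neg_distrib]
  refine sum_congr rfl fun r hr => ?_
  have hr : r < a := mem_range.mp hr
  have ha : (a : ℝ) ≠ 0 := by exact_mod_cast (Nat.zero_le r).trans_lt hr |>.ne'
  have hnum : ((c : ℝ) - ((a - r : ℕ) : ℝ) * b) / a = ((c : ℝ) + r * b) / a + (-b : ℤ) := by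
    rw [Nat.cast_sub hr.le]
    push_cast
    field_simp
    ring
  rw [hnum, Int.fract_add_intCast, Nat.cast_sub hr.le, sub_div, div_self ha, sawtooth_one_sub]
  ring

lemma sum_Icc_fract_add_mul_sawtooth (a : ℕ) (b c : ℤ) :
    ∑ r ∈ Icc 1 a, Int.fract (((c : ℝ) + r * b) / a) * sawtooth ((r : ℝ) / a)
      = ∑ r ∈ range a, Int.fract (((c : ℝ) + r * b) / a) * sawtooth ((r : ℝ) / a) :=
  sum_Icc_one_eq_sum_range (by
    rw [sawtooth_natCast_div_self, Nat.cast_zero, zero_div, sawtooth_zero, mul_zero, mul_zero])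

lemma sum_Icc_fract_diff_mul_sawtooth (a : ℕ) {b b' : ℤ} (c : ℤ)
    (hbb' : b * b' ≡ 1 [ZMOD a]) :
    ∑ r ∈ Icc 1 a, (Int.fract (((c : ℝ) - r * b) / a) - Int.fract (((c : ℝ) + r * b) / a))
        * sawtooth ((r : ℝ) / a)
      = -2 * drSum b a ((c : ℝ) / a) 0 - sawtooth ((b' : ℝ) * c / a) := by
  simp only [sub_mul, sum_sub_distrib]
  rw [sum_Icc_fract_sub_mul_sawtooth, sum_Icc_fract_add_mul_sawtooth,
    sum_range_fract_mul_sawtooth_eq_drSum a c hbb']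
  ring

theorem fract_sawtooth_sum_eq_general (a : ℕ) (b b' γ δ : ℤ)
    (hbb' : b * b' ≡ 1 [ZMOD (a : ℤ)]) :
    ∑ r ∈ Finset.Icc 1 a,
        (Int.fract (((γ : ℝ) - (r : ℝ) * b) / a) + Int.fract (((δ : ℝ) - (r : ℝ) * b) / a)
          - Int.fract (((γ : ℝ) + (r : ℝ) * b) / a) - Int.fract (((δ : ℝ) + (r : ℝ) * b) / a))
          * sawtooth ((r : ℝ) / a)
      = -2 * drSum b a ((γ : ℝ) / a) 0 - 2 * drSum b a ((δ : ℝ) / a) 0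
        - sawtooth ((b' : ℝ) * (γ : ℝ) / a) - sawtooth ((b' : ℝ) * (δ : ℝ) / a) := by
  have h := congrArg₂ (· + ·) (sum_Icc_fract_diff_mul_sawtooth a γ hbb')
    (sum_Icc_fract_diff_mul_sawtooth a δ hbb')
  rw [← sum_add_distrib] at h
  convert h using 1
  · exact sum_congr rfl fun r _ => by ring
  · ring

theorem fract_sawtooth_sum_eq (a : ℕ) (ha : 0 < a) (b b' γ δ : ℤ)
    (hb : Int.gcd b a = 1) (hbb' : b * b' ≡ 1 [ZMOD (a : ℤ)]) :
    ∑ r ∈ Finset.Icc 1 a,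
        (Int.fract (((γ : ℝ) - (r : ℝ) * b) / a) + Int.fract (((δ : ℝ) - (r : ℝ) * b) / a)
          - Int.fract (((γ : ℝ) + (r : ℝ) * b) / a) - Int.fract (((δ : ℝ) + (r : ℝ) * b) / a))
          * sawtooth ((r : ℝ) / a)
      = -2 * drSum b a ((γ : ℝ) / a) 0 - 2 * drSum b a ((δ : ℝ) / a) 0
        - sawtooth ((b' : ℝ) * (γ : ℝ) / a) - sawtooth ((b' : ℝ) * (δ : ℝ) / a) :=
  fract_sawtooth_sum_eq_general a b b' γ δ hbb'
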